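/- Let A, E ∈ ℝ^{m×n} with m ≥ n, rank(A) = n, ‖E‖ < σ_n(A), and let b, e ∈ ℝ^m. If y minimizes ‖Ax − b‖₂ over x ∈ ℝⁿ and ŷ minimizes ‖(A+E)x − (b+e)‖₂ over x ∈ ℝⁿ, then ‖y − ŷ‖₂ ≤ (√2 ‖E‖ ‖b‖₂ + σ_n(A) ‖e‖₂) / (σ_n(A)(σ_n(A) − ‖E‖)). -/

import Mathlib

/-!
Write `g = f + p` for the perturbed map (`f = A`, `p = E`, `σ = σₙ(A)`, `ε = ‖E‖`). The normal
equations make `r = b - f y` orthogonal to `range f` and give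
`‖g (ŷ - y)‖² = ⟪r, g (ŷ - y)⟫ + ⟪e - p y, g (ŷ - y)⟫`.
Every vector `f x` lies within `‖p x‖ ≤ (ε/σ)‖f x‖` of `range g`; as `range f` and `range g` have
the same dimension, the converse holds with the same constant, so that
`⟪r, g (ŷ - y)⟫ ≤ (ε/σ)‖r‖‖g (ŷ - y)‖` (the direct estimate would only give `ε/(σ - ε)`).
Together with `(σ - ε)‖ŷ - y‖ ≤ ‖g (ŷ - y)‖`, `σ‖y‖ ≤ ‖f y‖` and
`‖f y‖ + ‖r‖ ≤ √2‖b‖` (Pythagoras) this gives the bound.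
-/

open Matrix

/-- The spectral (ℓ²-operator) norm of a real matrix. -/
noncomputable def specNorm {m n : ℕ} (M : Matrix (Fin m) (Fin n) ℝ) : ℝ :=
  ‖LinearMap.toContinuousLinearMap (Matrix.toEuclideanLin M)‖

/-- The smallest singular value of a real matrix (the infimum of `‖Mx‖` over
unit vectors `x`). -/
noncomputable def sigmaMin {m n : ℕ} (M : Matrix (Fin m) (Fin n) ℝ) : ℝ :=
  sInf ((fun x : EuclideanSpace ℝ (Fin n) => ‖Matrix.toEuclideanLin M x‖) '' {x | ‖x‖ = 1})

open scoped RealInnerProductSpace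

namespace Submodule

variable {G : Type*} [NormedAddCommGroup G] [InnerProductSpace ℝ G]

theorem norm_sub_starProjection_le (K : Submodule ℝ G) [K.HasOrthogonalProjection] (v : G)
    {w : G} (hw : w ∈ K) : ‖v - K.starProjection v‖ ≤ ‖v - w‖ := by
  rw [starProjection_minimal]
  exact ciInf_le ⟨0, by rintro _ ⟨_, rfl⟩; positivity⟩ (⟨w, hw⟩ : K)

theorem norm_sub_starProjection_le_iff (K : Submodule ℝ G) [K.HasOrthogonalProjection] (v : G)
    {c : ℝ} (hc0 : 0 ≤ c) (hc1 : c ≤ 1) :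
    ‖v - K.starProjection v‖ ≤ c * ‖v‖ ↔ √(1 - c ^ 2) * ‖v‖ ≤ ‖K.starProjection v‖ := by
  have hpyth := K.norm_sq_eq_add_norm_sq_starProjection v
  rw [starProjection_orthogonal_val] at hpyth
  have hsq : (√(1 - c ^ 2) * ‖v‖) ^ 2 = (1 - c ^ 2) * ‖v‖ ^ 2 := by
    rw [mul_pow, Real.sq_sqrt (by nlinarith)]
  rw [← pow_le_pow_iff_left₀ (norm_nonneg _) (by positivity) two_ne_zero,
    ← pow_le_pow_iff_left₀ (by positivity) (norm_nonneg _) two_ne_zero, hsq]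
  constructor <;> intro h <;> nlinarith

/-- `U.starProjection` maps `V` isomorphically onto `U`, and for `u = U.starProjection v` one has
`‖u‖² = ⟪V.starProjection u, v⟫`. -/
theorem le_norm_starProjection_symm {U V : Submodule ℝ G} [FiniteDimensional ℝ U]
    [FiniteDimensional ℝ V] (hUV : Module.finrank ℝ U = Module.finrank ℝ V) {k : ℝ} (hk : 0 < k)
    (h : ∀ v ∈ V, k * ‖v‖ ≤ ‖U.starProjection v‖) {u : G} (hu : u ∈ U) :
    k * ‖u‖ ≤ ‖V.starProjection u‖ := by
  let T : V →ₗ[ℝ] U := U.orthogonalProjectionOnto.toLinearMap ∘ₗ V.subtype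
  have hT : Function.Injective T := by
    refine (injective_iff_map_eq_zero T).2 fun v hv => ?_
    have hPv : U.starProjection v = 0 := congrArg Subtype.val hv
    have hkv : k * ‖(v : G)‖ ≤ 0 := by simpa [hPv] using h v v.2
    exact Subtype.ext (norm_le_zero_iff.1 (nonpos_of_mul_nonpos_right hkv hk))
  obtain ⟨v, hv⟩ := (LinearMap.injective_iff_surjective_of_finrank_eq_finrank hUV.symm).1 hT ⟨u, hu⟩
  have hPv : U.starProjection v = u := congrArg Subtype.val hv
  have hkv : k * ‖(v : G)‖ ≤ ‖u‖ := hPv ▸ h v v.2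
  have hu_sq : ‖u‖ ^ 2 ≤ ‖V.starProjection u‖ * ‖(v : G)‖ := calc
    ‖u‖ ^ 2 = ⟪U.starProjection v, U.starProjection v⟫ := by rw [hPv, real_inner_self_eq_norm_sq]
    _ = ⟪u, v⟫ := by
      rw [← inner_starProjection_left_eq_right, starProjection_eq_self_iff.2 (hPv ▸ hu), hPv]
    _ = ⟪V.starProjection u, v⟫ := by
      rw [inner_starProjection_left_eq_right, starProjection_eq_self_iff.2 v.2]
    _ ≤ ‖V.starProjection u‖ * ‖(v : G)‖ := real_inner_le_norm _ _
  rcases (norm_nonneg u).eq_or_lt with hu0 | hu0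
  · rw [← hu0, mul_zero]
    exact norm_nonneg _
  refine le_of_mul_le_mul_right ?_ hu0
  calc k * ‖u‖ * ‖u‖ = k * ‖u‖ ^ 2 := by ring
    _ ≤ k * (‖V.starProjection u‖ * ‖(v : G)‖) := mul_le_mul_of_nonneg_left hu_sq hk.le
    _ = ‖V.starProjection u‖ * (k * ‖(v : G)‖) := by ring
    _ ≤ ‖V.starProjection u‖ * ‖u‖ := mul_le_mul_of_nonneg_left hkv (norm_nonneg _)

theorem norm_sub_starProjection_le_symm {U V : Submodule ℝ G} [FiniteDimensional ℝ U]
    [FiniteDimensional ℝ V] (hUV : Module.finrank ℝ U = Module.finrank ℝ V) {c : ℝ}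
    (hc0 : 0 ≤ c) (hc1 : c < 1) (h : ∀ v ∈ V, ‖v - U.starProjection v‖ ≤ c * ‖v‖) {u : G}
    (hu : u ∈ U) : ‖u - V.starProjection u‖ ≤ c * ‖u‖ := by
  have hk : 0 < √(1 - c ^ 2) := Real.sqrt_pos.2 (by nlinarith)
  rw [norm_sub_starProjection_le_iff _ _ hc0 hc1.le]
  exact le_norm_starProjection_symm hUV hk
    (fun v hv => (norm_sub_starProjection_le_iff _ _ hc0 hc1.le).1 (h v hv)) hu

end Submodule

section LeastSquares

variable {F G : Type*} [NormedAddCommGroup F] [InnerProductSpace ℝ F]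
  [NormedAddCommGroup G] [InnerProductSpace ℝ G]

theorem norm_add_norm_le_sqrt_two_mul_norm_add {x y : G} (h : ⟪x, y⟫ = 0) :
    ‖x‖ + ‖y‖ ≤ √2 * ‖x + y‖ := by
  rw [← Real.sqrt_sq (norm_nonneg (x + y)), ← Real.sqrt_mul zero_le_two,
    Real.le_sqrt (by positivity) (by positivity), norm_add_sq_real, h]
  nlinarith [sq_nonneg (‖x‖ - ‖y‖)]

theorem LinearMap.inner_sub_apply_eq_zero_of_forall_norm_le (f : F →ₗ[ℝ] G) {b : G} {y : F}
    (hy : ∀ x, ‖f y - b‖ ≤ ‖f x - b‖) (x : F) : ⟪b - f y, f x⟫ = 0 := by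
  have hmin : ‖b - f y‖ = ⨅ w : (LinearMap.range f : Set G), ‖b - w‖ := by
    refine le_antisymm (le_ciInf ?_) (ciInf_le ⟨0, ?_⟩
      (⟨f y, LinearMap.mem_range_self f y⟩ : (LinearMap.range f : Set G)))
    · rintro ⟨_, x, rfl⟩
      simpa only [norm_sub_rev] using hy x
    · rintro _ ⟨_, rfl⟩
      positivity
  exact (Submodule.norm_eq_iInf_iff_real_inner_eq_zero _ (LinearMap.mem_range_self f y)).1 hmin
    (f x) (LinearMap.mem_range_self f x)

theorem LinearMap.injective_of_mul_norm_le (f : F →ₗ[ℝ] G) {σ : ℝ} (hσ : 0 < σ)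
    (hf : ∀ x, σ * ‖x‖ ≤ ‖f x‖) : Function.Injective f := by
  refine (injective_iff_map_eq_zero f).2 fun x hx => ?_
  have hσx := hf x
  rw [hx, norm_zero] at hσx
  exact norm_le_zero_iff.1 (nonpos_of_mul_nonpos_right hσx hσ)

theorem LinearMap.sub_mul_norm_le_norm_add_apply {f p : F →ₗ[ℝ] G} {σ ε : ℝ}
    (hf : ∀ x, σ * ‖x‖ ≤ ‖f x‖) (hp : ∀ x, ‖p x‖ ≤ ε * ‖x‖) (x : F) :
    (σ - ε) * ‖x‖ ≤ ‖(f + p) x‖ := by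
  have hsub := norm_sub_norm_le (f x) (-p x)
  rw [norm_neg, sub_neg_eq_add] at hsub
  rw [add_apply]
  linarith [hf x, hp x]

variable [FiniteDimensional ℝ F]

theorem LinearMap.norm_sub_starProjection_range_add_le {f p : F →ₗ[ℝ] G} {σ ε : ℝ}
    (hσ : 0 < σ) (hε0 : 0 ≤ ε) (hf : ∀ x, σ * ‖x‖ ≤ ‖f x‖) (hp : ∀ x, ‖p x‖ ≤ ε * ‖x‖)
    (x : F) : ‖f x - (range (f + p)).starProjection (f x)‖ ≤ ε / σ * ‖f x‖ := calc
  _ ≤ ‖f x - (f + p) x‖ := Submodule.norm_sub_starProjection_le _ _ (mem_range_self _ x)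
  _ = ‖p x‖ := by rw [add_apply, sub_add_cancel_left, norm_neg]
  _ ≤ ε * ‖x‖ := hp x
  _ = ε / σ * (σ * ‖x‖) := by field_simp
  _ ≤ ε / σ * ‖f x‖ := mul_le_mul_of_nonneg_left (hf x) (by positivity)

theorem LinearMap.inner_le_of_forall_inner_apply_eq_zero {f p : F →ₗ[ℝ] G} {σ ε : ℝ}
    (hε0 : 0 ≤ ε) (hε : ε < σ) (hf : ∀ x, σ * ‖x‖ ≤ ‖f x‖) (hp : ∀ x, ‖p x‖ ≤ ε * ‖x‖)
    {r : G} (hr : ∀ x, ⟪r, f x⟫ = 0) {u : G} (hu : u ∈ range (f + p)) :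
    ⟪r, u⟫ ≤ ε / σ * ‖r‖ * ‖u‖ := by
  have hσ : 0 < σ := hε0.trans_lt hε
  have hfin : Module.finrank ℝ (range (f + p)) = Module.finrank ℝ (range f) := by
    rw [finrank_range_of_inj (injective_of_mul_norm_le f hσ hf),
      finrank_range_of_inj (injective_of_mul_norm_le (f + p) (sub_pos.2 hε)
        (sub_mul_norm_le_norm_add_apply hf hp))]
  have hdist : ‖u - (range f).starProjection u‖ ≤ ε / σ * ‖u‖ :=
    Submodule.norm_sub_starProjection_le_symm hfin (by positivity) ((div_lt_one hσ).2 hε)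
      (by rintro _ ⟨x, rfl⟩; exact norm_sub_starProjection_range_add_le hσ hε0 hf hp x) hu
  have hproj : ⟪r, (range f).starProjection u⟫ = 0 := by
    obtain ⟨x, hx⟩ := (range f).starProjection_apply_mem u
    rw [← hx, hr]
  calc ⟪r, u⟫ = ⟪r, u - (range f).starProjection u⟫ := by rw [inner_sub_right, hproj, sub_zero]
    _ ≤ ‖r‖ * ‖u - (range f).starProjection u‖ := real_inner_le_norm _ _
    _ ≤ ‖r‖ * (ε / σ * ‖u‖) := mul_le_mul_of_nonneg_left hdist (norm_nonneg r)
    _ = ε / σ * ‖r‖ * ‖u‖ := by ring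

theorem LinearMap.norm_add_apply_sub_le {f p : F →ₗ[ℝ] G} {σ ε : ℝ} (hε0 : 0 ≤ ε) (hε : ε < σ)
    (hf : ∀ x, σ * ‖x‖ ≤ ‖f x‖) (hp : ∀ x, ‖p x‖ ≤ ε * ‖x‖) {b e : G} {y ŷ : F}
    (hy : ∀ x, ‖f y - b‖ ≤ ‖f x - b‖)
    (hŷ : ∀ x, ‖(f + p) ŷ - (b + e)‖ ≤ ‖(f + p) x - (b + e)‖) :
    ‖(f + p) (ŷ - y)‖ ≤ ε / σ * ‖b - f y‖ + ‖e‖ + ε * ‖y‖ := by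
  have hσ : 0 < σ := hε0.trans_lt hε
  set z := (f + p) (ŷ - y)
  have hsplit : (b + e) - (f + p) ŷ = (b - f y) + (e - p y) - z := by
    simp only [z, map_sub, add_apply]
    abel
  have hz : ‖z‖ ^ 2 = ⟪b - f y, z⟫ + ⟪e - p y, z⟫ := by
    have horth := inner_sub_apply_eq_zero_of_forall_norm_le (f + p) hŷ (ŷ - y)
    rw [hsplit, inner_sub_left, inner_add_left, real_inner_self_eq_norm_sq] at horth
    linarith
  have hres : ⟪b - f y, z⟫ ≤ ε / σ * ‖b - f y‖ * ‖z‖ :=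
    inner_le_of_forall_inner_apply_eq_zero hε0 hε hf hp
      (inner_sub_apply_eq_zero_of_forall_norm_le f hy) (mem_range_self _ _)
  have hdata : ⟪e - p y, z⟫ ≤ (‖e‖ + ε * ‖y‖) * ‖z‖ :=
    (real_inner_le_norm _ _).trans <| mul_le_mul_of_nonneg_right
      ((norm_sub_le _ _).trans (add_le_add le_rfl (hp y))) (norm_nonneg z)
  rcases (norm_nonneg z).eq_or_lt with hz0 | hz0
  · rw [← hz0]
    positivity
  refine le_of_mul_le_mul_right ?_ hz0
  nlinarith

theorem LinearMap.norm_sub_le_of_forall_norm_le {f p : F →ₗ[ℝ] G} {σ ε : ℝ} (hε0 : 0 ≤ ε)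
    (hε : ε < σ) (hf : ∀ x, σ * ‖x‖ ≤ ‖f x‖) (hp : ∀ x, ‖p x‖ ≤ ε * ‖x‖) {b e : G} {y ŷ : F}
    (hy : ∀ x, ‖f y - b‖ ≤ ‖f x - b‖)
    (hŷ : ∀ x, ‖(f + p) ŷ - (b + e)‖ ≤ ‖(f + p) x - (b + e)‖) :
    ‖y - ŷ‖ ≤ (√2 * ε * ‖b‖ + σ * ‖e‖) / (σ * (σ - ε)) := by
  have hσ : 0 < σ := hε0.trans_lt hε
  have hpyth : ‖f y‖ + ‖b - f y‖ ≤ √2 * ‖b‖ := by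
    have h := norm_add_norm_le_sqrt_two_mul_norm_add
      (real_inner_comm (b - f y) (f y) ▸ inner_sub_apply_eq_zero_of_forall_norm_le f hy y)
    rwa [add_sub_cancel] at h
  rw [le_div_iff₀ (mul_pos hσ (sub_pos.2 hε)), norm_sub_rev]
  calc ‖ŷ - y‖ * (σ * (σ - ε)) = σ * ((σ - ε) * ‖ŷ - y‖) := by ring
    _ ≤ σ * (ε / σ * ‖b - f y‖ + ‖e‖ + ε * ‖y‖) := by
      gcongr
      exact (sub_mul_norm_le_norm_add_apply hf hp _).trans
        (norm_add_apply_sub_le hε0 hε hf hp hy hŷ)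
    _ = ε * (‖b - f y‖ + σ * ‖y‖) + σ * ‖e‖ := by field_simp; ring
    _ ≤ ε * (√2 * ‖b‖) + σ * ‖e‖ := by gcongr; linarith [hf y]
    _ = √2 * ε * ‖b‖ + σ * ‖e‖ := by ring

end LeastSquares

theorem specNorm_nonneg {m n : ℕ} (M : Matrix (Fin m) (Fin n) ℝ) : 0 ≤ specNorm M :=
  norm_nonneg _

theorem norm_toEuclideanLin_apply_le {m n : ℕ} (M : Matrix (Fin m) (Fin n) ℝ)
    (x : EuclideanSpace ℝ (Fin n)) : ‖toEuclideanLin M x‖ ≤ specNorm M * ‖x‖ :=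
  (LinearMap.toContinuousLinearMap (toEuclideanLin M)).le_opNorm x

theorem sigmaMin_mul_norm_le {m n : ℕ} (M : Matrix (Fin m) (Fin n) ℝ)
    (x : EuclideanSpace ℝ (Fin n)) : sigmaMin M * ‖x‖ ≤ ‖toEuclideanLin M x‖ := by
  rcases eq_or_ne x 0 with rfl | hx
  · simp
  have hx' : 0 < ‖x‖ := norm_pos_iff.2 hx
  have hunit : ‖‖x‖⁻¹ • x‖ = 1 := by rw [norm_smul, norm_inv, norm_norm, inv_mul_cancel₀ hx'.ne']
  have hle : sigmaMin M ≤ ‖toEuclideanLin M (‖x‖⁻¹ • x)‖ :=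
    csInf_le ⟨0, by rintro _ ⟨_, _, rfl⟩; positivity⟩ ⟨_, hunit, rfl⟩
  rw [map_smul, norm_smul, norm_inv, norm_norm, inv_mul_eq_div, le_div_iff₀ hx'] at hle
  exact hle

theorem least_squares_stability_general (m n : ℕ)
    (A E : Matrix (Fin m) (Fin n) ℝ) (hE : specNorm E < sigmaMin A)
    (b e : EuclideanSpace ℝ (Fin m)) (y yt : EuclideanSpace ℝ (Fin n))
    (hy : ∀ x : EuclideanSpace ℝ (Fin n),
      ‖Matrix.toEuclideanLin A y - b‖ ≤ ‖Matrix.toEuclideanLin A x - b‖)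
    (hyt : ∀ x : EuclideanSpace ℝ (Fin n),
      ‖Matrix.toEuclideanLin (A + E) yt - (b + e)‖
        ≤ ‖Matrix.toEuclideanLin (A + E) x - (b + e)‖) :
    ‖y - yt‖ ≤ (Real.sqrt 2 * specNorm E * ‖b‖ + sigmaMin A * ‖e‖)
        / (sigmaMin A * (sigmaMin A - specNorm E)) := by
  rw [map_add] at hyt
  exact LinearMap.norm_sub_le_of_forall_norm_le (specNorm_nonneg E) hE (sigmaMin_mul_norm_le A)
    (norm_toEuclideanLin_apply_le E) hy hyt

/-- Error resilience of least squares: if `y` minimizes `‖Ax − b‖₂` and `ŷ`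
minimizes `‖(A+E)x − (b+e)‖₂`, where `A` has full column rank `n`, `m ≥ n` and
`‖E‖ < σₙ(A)`, then
`‖y − ŷ‖₂ ≤ (√2 ‖E‖ ‖b‖₂ + σₙ(A) ‖e‖₂) / (σₙ(A)(σₙ(A) − ‖E‖))`. -/
theorem least_squares_stability (m n : ℕ) (hmn : n ≤ m)
    (A E : Matrix (Fin m) (Fin n) ℝ) (hA : A.rank = n) (hE : specNorm E < sigmaMin A)
    (b e : EuclideanSpace ℝ (Fin m)) (y yt : EuclideanSpace ℝ (Fin n))
    (hy : ∀ x : EuclideanSpace ℝ (Fin n),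
      ‖Matrix.toEuclideanLin A y - b‖ ≤ ‖Matrix.toEuclideanLin A x - b‖)
    (hyt : ∀ x : EuclideanSpace ℝ (Fin n),
      ‖Matrix.toEuclideanLin (A + E) yt - (b + e)‖
        ≤ ‖Matrix.toEuclideanLin (A + E) x - (b + e)‖) :
    ‖y - yt‖ ≤ (Real.sqrt 2 * specNorm E * ‖b‖ + sigmaMin A * ‖e‖)
        / (sigmaMin A * (sigmaMin A - specNorm E)) :=
  least_squares_stability_general m n A E hE b e y yt hy hyt
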